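/- arXiv:2412.20705 — 4 statements merged into one kernel-verified Lean document; each statement's English description precedes it below -/
import Mathlib

section
/- For 0 < σ < 1 there exist constants 0 < c ≤ C such that c · r^{-1-σ} ≤ |p''(r)| ≤ C · r^{-1-σ} for all r ≥ 1, where p(r) = (r² + r^{2-σ})^{1/2}. -/
open Real

private lemma hdp (σ : ℝ) (x : ℝ) (hx : 0 < x) :
    HasDerivAt (fun y : ℝ => Real.sqrt (y ^ (2:ℝ) + y ^ (2 - σ)))
      ((2 * x ^ ((2:ℝ)-1) + (2-σ) * x ^ (2-σ-1)) / (2 * Real.sqrt (x ^ (2:ℝ) + x ^ (2-σ)))) x := by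
  have hA : HasDerivAt (fun y : ℝ => y ^ (2:ℝ) + y ^ (2 - σ))
      (2 * x ^ ((2:ℝ)-1) + (2-σ) * x ^ (2-σ-1)) x :=
    (Real.hasDerivAt_rpow_const (Or.inl hx.ne')).add
      (Real.hasDerivAt_rpow_const (Or.inl hx.ne'))
  exact hA.sqrt (by positivity)

private lemma hdg (σ : ℝ) (x : ℝ) (hx : 0 < x) :
    HasDerivAt (fun y : ℝ =>
        (2 * y ^ ((2:ℝ)-1) + (2-σ) * y ^ (2-σ-1)) / (2 * Real.sqrt (y ^ (2:ℝ) + y ^ (2-σ))))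
      (((2 * (((2:ℝ)-1) * x ^ ((2:ℝ)-1-1)) + (2-σ) * ((2-σ-1) * x ^ (2-σ-1-1)))
          * (2 * Real.sqrt (x ^ (2:ℝ) + x ^ (2-σ)))
        - (2 * x ^ ((2:ℝ)-1) + (2-σ) * x ^ (2-σ-1))
          * (2 * ((2 * x ^ ((2:ℝ)-1) + (2-σ) * x ^ (2-σ-1))
              / (2 * Real.sqrt (x ^ (2:ℝ) + x ^ (2-σ))))))
        / (2 * Real.sqrt (x ^ (2:ℝ) + x ^ (2-σ)))^2) x := by
  have hN : HasDerivAt (fun y : ℝ => 2 * y ^ ((2:ℝ)-1) + (2-σ) * y ^ (2-σ-1))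
      (2 * (((2:ℝ)-1) * x ^ ((2:ℝ)-1-1)) + (2-σ) * ((2-σ-1) * x ^ (2-σ-1-1))) x :=
    ((Real.hasDerivAt_rpow_const (p := (2:ℝ)-1) (Or.inl hx.ne')).const_mul 2).add
      ((Real.hasDerivAt_rpow_const (p := 2-σ-1) (Or.inl hx.ne')).const_mul (2-σ))
  have hD : HasDerivAt (fun y : ℝ => 2 * Real.sqrt (y ^ (2:ℝ) + y ^ (2-σ)))
      (2 * ((2 * x ^ ((2:ℝ)-1) + (2-σ) * x ^ (2-σ-1))
        / (2 * Real.sqrt (x ^ (2:ℝ) + x ^ (2-σ))))) x := (hdp σ x hx).const_mul 2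
  exact hN.div hD (by positivity)

private lemma hval (σ r : ℝ) (hr : 0 < r) :
    deriv (deriv (fun x : ℝ => Real.sqrt (x ^ (2:ℝ) + x ^ (2-σ)))) r
      = -((2*σ*(1-σ) + σ*(2-σ)*r^(-σ)) * r^(-σ))
          / (4 * r * (Real.sqrt (1 + r^(-σ)))^3) := by
  have hev : deriv (fun x : ℝ => Real.sqrt (x ^ (2:ℝ) + x ^ (2-σ)))
      =ᶠ[nhds r] (fun x => (2 * x ^ ((2:ℝ)-1) + (2-σ) * x ^ (2-σ-1))
          / (2 * Real.sqrt (x ^ (2:ℝ) + x ^ (2-σ)))) := by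
    filter_upwards [Ioi_mem_nhds hr] with x hx
    exact (hdp σ x hx).deriv
  rw [hev.deriv_eq, (hdg σ r hr).deriv]
  have h1 : r ^ ((2:ℝ)-1) = r := by norm_num
  have h3 : r ^ ((2:ℝ)-1-1) = 1 := by norm_num
  have h2 : r ^ (2-σ-1) = r * r^(-σ) := by
    rw [show (2-σ-1:ℝ) = 1 + -σ by ring, Real.rpow_add hr, Real.rpow_one]
  have h4 : r ^ (2-σ-1-1) = r^(-σ) := by rw [show (2-σ-1-1:ℝ) = -σ by ring]
  have h5 : Real.sqrt (r^(2:ℝ) + r^(2-σ)) = r * Real.sqrt (1 + r^(-σ)) := by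
    have e : r^(2:ℝ) + r^(2-σ) = r^2 * (1 + r^(-σ)) := by
      rw [show (2-σ:ℝ) = 2 + -σ by ring, Real.rpow_add hr,
        show ((2:ℝ)) = ((2:ℕ):ℝ) by norm_num, Real.rpow_natCast]
      ring
    rw [e, Real.sqrt_mul (sq_nonneg r), Real.sqrt_sq hr.le]
  rw [h1, h2, h3, h4, h5]
  set t := r ^ (-σ) with ht
  set w := Real.sqrt (1 + t) with hw
  have ht0 : 0 < t := Real.rpow_pos_of_pos hr _
  have hw2 : w^2 = 1 + t := Real.sq_sqrt (by linarith)
  have hw0 : 0 < w := Real.sqrt_pos.mpr (by linarith)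
  have ht' : t = w^2 - 1 := by linarith
  rw [ht']
  field_simp
  ring

theorem dispersion_second_deriv_high_small_sigma (σ : ℝ) (hσ0 : 0 < σ) (hσ1 : σ < 1)
    (p : ℝ → ℝ) (hp : p = fun r => Real.sqrt (r ^ (2:ℝ) + r ^ (2 - σ))) :
    ∃ c C : ℝ, 0 < c ∧ c ≤ C ∧
      ∀ r : ℝ, 1 ≤ r →
        c * r ^ (-(1 + σ)) ≤ |deriv (deriv p) r| ∧
        |deriv (deriv p) r| ≤ C * r ^ (-(1 + σ)) := by
  subst hp
  refine ⟨σ*(1-σ)/6, σ, by nlinarith, by nlinarith, ?_⟩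
  intro r hr1
  have hr : (0:ℝ) < r := lt_of_lt_of_le one_pos hr1
  rw [hval σ r hr]
  set t := r ^ (-σ) with ht
  set w := Real.sqrt (1 + t) with hw
  have ht0 : 0 < t := Real.rpow_pos_of_pos hr _
  have ht1 : t ≤ 1 := Real.rpow_le_one_of_one_le_of_nonpos hr1 (by linarith)
  have hw2 : w^2 = 1 + t := Real.sq_sqrt (by linarith)
  have hw0 : 0 < w := Real.sqrt_pos.mpr (by linarith)
  have hw1 : 1 ≤ w := by nlinarith
  have hwu : w ≤ 3/2 := by nlinarith
  have hwc : w^3 ≤ 3 := by nlinarith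
  have hw3 : 1 ≤ w^3 := by nlinarith
  have hnum : 0 < 2*σ*(1-σ) + σ*(2-σ)*t := by nlinarith [mul_pos (mul_pos hσ0 (by linarith : (0:ℝ) < 2-σ)) ht0]
  have habs : |(-((2*σ*(1-σ) + σ*(2-σ)*t) * t)
      / (4 * r * w^3))|
      = ((2*σ*(1-σ) + σ*(2-σ)*t) * t) / (4 * r * w^3) := by
    rw [abs_div, abs_neg, abs_of_pos (by positivity), abs_of_pos (by positivity)]
  rw [habs]
  have hpow : r ^ (-(1+σ)) = t / r := by
    rw [ht, show (-(1+σ):ℝ) = -1 + -σ by ring, Real.rpow_add hr, Real.rpow_neg_one]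
    ring
  rw [hpow]
  constructor
  · rw [div_mul_div_comm, div_le_div_iff₀ (by positivity) (by positivity)]
    nlinarith [mul_nonneg (mul_nonneg (mul_nonneg hσ0.le (by linarith : (0:ℝ) ≤ 1-σ)) ht0.le) hr.le,
      mul_nonneg (mul_nonneg (mul_nonneg hσ0.le (by linarith : (0:ℝ) ≤ 2-σ)) (mul_nonneg ht0.le ht0.le)) hr.le,
      mul_nonneg (mul_nonneg (mul_nonneg (mul_nonneg hσ0.le (by linarith : (0:ℝ) ≤ 1-σ)) ht0.le) hr.le) (by linarith : (0:ℝ) ≤ 3 - w^3)]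
  · rw [mul_div_assoc', div_le_div_iff₀ (by positivity) (by positivity)]
    nlinarith [mul_nonneg (mul_nonneg hσ0.le ht0.le) hr.le,
      mul_nonneg (mul_nonneg (mul_nonneg hσ0.le ht0.le) hr.le) (by linarith : (0:ℝ) ≤ w^3 - 1),
      mul_nonneg (mul_nonneg (mul_nonneg hσ0.le ht0.le) hr.le) (by linarith : (0:ℝ) ≤ 1 - t)]
end

section
/- For 4/3 < σ < 2 there exist constants 0 < c ≤ C such that c · r^{-1-σ} ≤ |p''(r)| ≤ C · r^{-1-σ} for all r ≥ 1, where p(r) = (r² + r^{2-σ})^{1/2}. -/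
/-!
For `f = r² + r^(2-σ)` one has `(√f)'' = (2 f f'' - f'²) / (4 f^(3/2))`. Writing `t = r^(-σ)`,
the numerator collapses to `σ r² t (2(σ - 1) - (2 - σ) t)`, so
`p''(r) = r^(-1-σ) · σ (2(σ - 1) - (2 - σ) t) / (4 (1 + t)^(3/2))`.
For `r ≥ 1` we have `t ∈ (0, 1]`, and on that range the last factor lies between
`σ (3σ - 4) / 12` and `σ (σ - 1) / 2`; the lower bound is positive exactly because `σ > 4/3`.
-/

open Real Filter Topology

theorem deriv_deriv_sqrt_comp {f f' : ℝ → ℝ} {f'' x : ℝ}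
    (hf : ∀ᶠ y in 𝓝 x, HasDerivAt f (f' y) y) (hf' : HasDerivAt f' f'' x) (hx : 0 < f x) :
    deriv (deriv fun y => √(f y)) x = (2 * f x * f'' - f' x ^ 2) / (4 * √(f x) ^ 3) := by
  have hpos : ∀ᶠ y in 𝓝 x, 0 < f y :=
    hf.self_of_nhds.continuousAt.eventually (lt_mem_nhds hx)
  have hderiv : deriv (fun y => √(f y)) =ᶠ[𝓝 x] fun y => f' y / (2 * √(f y)) := by
    filter_upwards [hf, hpos] with y hfy hy
    exact hfy.sqrt hy.ne' |>.deriv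
  have hsqrt : HasDerivAt (fun y => √(f y)) (f' x / (2 * √(f x))) x :=
    hf.self_of_nhds.sqrt hx.ne'
  have hs : 0 < √(f x) := sqrt_pos.mpr hx
  have hquot : HasDerivAt (fun y => f' y / (2 * √(f y))) _ x :=
    hf'.div (hsqrt.const_mul 2) (by positivity)
  rw [hderiv.deriv_eq, hquot.deriv]
  have hsq : √(f x) ^ 2 = f x := sq_sqrt hx.le
  field_simp
  rw [hsq]
  ring

noncomputable def secondDerivFactor (σ t : ℝ) : ℝ :=
  σ * (2 * (σ - 1) - (2 - σ) * t) / (4 * √(1 + t) ^ 3)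

theorem deriv_deriv_sqrt_sq_add_rpow {σ r : ℝ} (hr : 0 < r) :
    deriv (deriv fun r => √(r ^ (2:ℝ) + r ^ (2 - σ))) r =
      r ^ (-(1 + σ)) * secondDerivFactor σ (r ^ (-σ)) := by
  have hf : ∀ᶠ y in 𝓝 r, HasDerivAt (fun r => r ^ (2:ℝ) + r ^ (2 - σ))
      (2 * y + (2 - σ) * y ^ (1 - σ)) y := by
    filter_upwards [lt_mem_nhds hr] with y hy
    refine ((hasDerivAt_rpow_const (p := 2) (Or.inl hy.ne')).add
      (hasDerivAt_rpow_const (p := 2 - σ) (Or.inl hy.ne'))).congr_deriv ?_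
    norm_num [show 2 - σ - 1 = 1 - σ by ring]
  have hf' : HasDerivAt (fun y => 2 * y + (2 - σ) * y ^ (1 - σ))
      (2 + (2 - σ) * (1 - σ) * r ^ (-σ)) r := by
    refine (((hasDerivAt_id r).const_mul 2).add
      ((hasDerivAt_rpow_const (p := 1 - σ) (Or.inl hr.ne')).const_mul (2 - σ))).congr_deriv ?_
    rw [show 1 - σ - 1 = -σ by ring]
    ring
  rw [deriv_deriv_sqrt_comp hf hf' (by positivity)]
  set t := r ^ (-σ)
  have h2 : r ^ (2 - σ) = r ^ 2 * t := by
    rw [sub_eq_add_neg, rpow_add hr, rpow_two]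
  have h1 : r ^ (1 - σ) = r * t := by
    rw [sub_eq_add_neg, rpow_add hr, rpow_one]
  have h3 : r ^ (-(1 + σ)) = t / r := by
    rw [neg_add, rpow_add hr, rpow_neg_one]
    ring
  have hsqrt : √(r ^ 2 * (1 + t)) = r * √(1 + t) := by
    rw [sqrt_mul (by positivity), sqrt_sq hr.le]
  have hs : 0 < √(1 + t) := sqrt_pos.mpr (by positivity)
  rw [rpow_two, h2, h1, h3, show r ^ 2 + r ^ 2 * t = r ^ 2 * (1 + t) by ring, hsqrt]
  unfold secondDerivFactor
  field_simp
  ring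

theorem le_secondDerivFactor {σ t : ℝ} (hσ : 4 / 3 ≤ σ) (hσ2 : σ ≤ 2) (ht : 0 ≤ t)
    (ht1 : t ≤ 1) : σ * (3 * σ - 4) / 12 ≤ secondDerivFactor σ t := by
  have hs : 0 < √(1 + t) := sqrt_pos.mpr (by linarith)
  have hs2 : √(1 + t) ^ 2 = 1 + t := sq_sqrt (by linarith)
  have hs3 : √(1 + t) ^ 3 ≤ 3 := by nlinarith
  have hnum : σ * (3 * σ - 4) ≤ σ * (2 * (σ - 1) - (2 - σ) * t) := by
    nlinarith [mul_nonneg (mul_nonneg (by linarith : 0 ≤ σ) (by linarith : 0 ≤ 2 - σ))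
      (by linarith : 0 ≤ 1 - t)]
  rw [secondDerivFactor, le_div_iff₀ (by positivity)]
  nlinarith [mul_le_mul_of_nonneg_left hs3 (by nlinarith : 0 ≤ σ * (3 * σ - 4))]

theorem secondDerivFactor_le {σ t : ℝ} (hσ : 1 ≤ σ) (hσ2 : σ ≤ 2) (ht : 0 ≤ t) :
    secondDerivFactor σ t ≤ σ * (σ - 1) / 2 := by
  have hs2 : √(1 + t) ^ 2 = 1 + t := sq_sqrt (by linarith)
  have hs1 : 1 ≤ √(1 + t) := by nlinarith [sqrt_nonneg (1 + t)]
  have hnum : σ * (2 * (σ - 1) - (2 - σ) * t) ≤ 2 * σ * (σ - 1) := by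
    nlinarith [mul_nonneg (mul_nonneg (by linarith : 0 ≤ σ) (by linarith : 0 ≤ 2 - σ)) ht]
  rw [secondDerivFactor, div_le_iff₀ (by positivity)]
  nlinarith [mul_le_mul_of_nonneg_left (one_le_pow₀ hs1 (n := 3))
    (by nlinarith : 0 ≤ σ * (σ - 1))]

theorem dispersion_second_deriv_high_large_sigma (σ : ℝ) (hσ : 4 / 3 < σ) (hσ2 : σ < 2)
    (p : ℝ → ℝ) (hp : p = fun r => Real.sqrt (r ^ (2:ℝ) + r ^ (2 - σ))) :
    ∃ c C : ℝ, 0 < c ∧ c ≤ C ∧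
      ∀ r : ℝ, 1 ≤ r →
        c * r ^ (-(1 + σ)) ≤ |deriv (deriv p) r| ∧
        |deriv (deriv p) r| ≤ C * r ^ (-(1 + σ)) := by
  subst hp
  refine ⟨σ * (3 * σ - 4) / 12, σ * (σ - 1) / 2, by nlinarith, by nlinarith, fun r hr => ?_⟩
  have hr0 : 0 < r := by linarith
  have ht1 : r ^ (-σ) ≤ 1 := rpow_le_one_of_one_le_of_nonpos hr (by linarith)
  have hlow := le_secondDerivFactor hσ.le hσ2.le (by positivity) ht1
  have hup := secondDerivFactor_le (t := r ^ (-σ)) (by linarith) hσ2.le (by positivity)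
  have hc : 0 ≤ σ * (3 * σ - 4) / 12 := by nlinarith
  rw [deriv_deriv_sqrt_sq_add_rpow hr0, abs_mul, abs_of_pos (by positivity),
    abs_of_nonneg (hc.trans hlow), mul_comm (r ^ (-(1 + σ)))]
  exact ⟨by gcongr, by gcongr⟩
end

section
/- Let 0 < σ < 2 and let a, b, c ∈ ℝ³ be nonzero vectors with a = b + c, |c| ≤ min(|a|, |b|), |a| > |b|, and cos[a,c] ≤ 9/10. Then p(|b|) + p(|c|) - p(|a|) ≥ p(|c|)/10, where p(r) = (r² + r^{2-σ})^{1/2}. -/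
/-! Since `cos[a,c] ≤ 9/10`, expanding `‖a‖² = ⟪a, b⟫ + ⟪a, c⟫` gives `|a| ≤ |b| + (9/10)|c|`.
Writing `p(r) = r Q(r)` with `Q` decreasing and `|b|, |c| ≤ |a|`, this yields
`p(|a|) = |a| Q(|a|) ≤ |b| Q(|b|) + (9/10)|c| Q(|c|) = p(|b|) + (9/10) p(|c|)`. -/

open Real Set

theorem norm_le_norm_add_mul_of_inner_le {E : Type*} [NormedAddCommGroup E]
    [InnerProductSpace ℝ E] {a b c : E} {κ : ℝ} (ha : a ≠ 0) (habc : a = b + c)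
    (h : inner ℝ a c ≤ κ * (‖a‖ * ‖c‖)) : ‖a‖ ≤ ‖b‖ + κ * ‖c‖ := by
  have hA : 0 < ‖a‖ := norm_pos_iff.mpr ha
  have hsq : ‖a‖ * ‖a‖ ≤ ‖a‖ * (‖b‖ + κ * ‖c‖) :=
    calc ‖a‖ * ‖a‖ = inner ℝ a b + inner ℝ a c := by
          rw [← real_inner_self_eq_norm_mul_norm, ← inner_add_right, ← habc]
      _ ≤ ‖a‖ * ‖b‖ + κ * (‖a‖ * ‖c‖) := add_le_add (real_inner_le_norm a b) h
      _ = ‖a‖ * (‖b‖ + κ * ‖c‖) := by ring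
  exact le_of_mul_le_mul_left hsq hA

theorem sqrt_rpow_two_add_rpow_eq_mul (σ : ℝ) {r : ℝ} (hr : 0 < r) :
    √(r ^ (2 : ℝ) + r ^ (2 - σ)) = r * √(1 + r ^ (-σ)) := by
  have hsplit : r ^ (2 : ℝ) + r ^ (2 - σ) = r ^ (2 : ℝ) * (1 + r ^ (-σ)) := by
    rw [mul_add, mul_one, ← rpow_add hr, sub_eq_add_neg]
  rw [hsplit, sqrt_mul (by positivity), rpow_two, sqrt_sq hr.le]

theorem antitoneOn_sqrt_one_add_rpow_neg {σ : ℝ} (hσ : 0 ≤ σ) :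
    AntitoneOn (fun r : ℝ => √(1 + r ^ (-σ))) (Ioi 0) := by
  intro s hs t _ hst
  have hpow : t ^ (-σ) ≤ s ^ (-σ) := rpow_le_rpow_of_nonpos hs hst (neg_nonpos.mpr hσ)
  exact sqrt_le_sqrt (add_le_add_right hpow 1)

theorem mul_le_add_mul_of_antitoneOn {Q : ℝ → ℝ} (hQ : AntitoneOn Q (Ioi 0))
    {a b c κ : ℝ} (hb : 0 < b) (hc : 0 < c) (hba : b ≤ a) (hca : c ≤ a) (hκ : 0 ≤ κ)
    (hQa : 0 ≤ Q a) (h : a ≤ b + κ * c) : a * Q a ≤ b * Q b + κ * (c * Q c) :=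
  calc a * Q a ≤ (b + κ * c) * Q a := mul_le_mul_of_nonneg_right h hQa
    _ = b * Q a + κ * (c * Q a) := by ring
    _ ≤ b * Q b + κ * (c * Q c) := by
      have hQb : Q a ≤ Q b := hQ hb (hb.trans_le hba) hba
      have hQc : Q a ≤ Q c := hQ hc (hc.trans_le hca) hca
      gcongr

theorem phase_lower_bound_angle_general (σ : ℝ) (hσ0 : 0 < σ)
    (p : ℝ → ℝ) (hp : p = fun r => Real.sqrt (r ^ (2:ℝ) + r ^ (2 - σ)))
    (a b c : EuclideanSpace ℝ (Fin 3))
    (ha : a ≠ 0) (hb : b ≠ 0) (hc : c ≠ 0) (habc : a = b + c)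
    (hcmin : ‖c‖ ≤ min ‖a‖ ‖b‖) (hba : ‖b‖ < ‖a‖)
    (hcos : (inner ℝ a c : ℝ) / (‖a‖ * ‖c‖) ≤ 9 / 10) :
    p ‖c‖ / 10 ≤ p ‖b‖ + p ‖c‖ - p ‖a‖ := by
  have hA : 0 < ‖a‖ := norm_pos_iff.mpr ha
  have hB : 0 < ‖b‖ := norm_pos_iff.mpr hb
  have hC : 0 < ‖c‖ := norm_pos_iff.mpr hc
  have hnorm : ‖a‖ ≤ ‖b‖ + 9 / 10 * ‖c‖ :=
    norm_le_norm_add_mul_of_inner_le ha habc ((div_le_iff₀ (by positivity)).mp hcos)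
  have hp_le : p ‖a‖ ≤ p ‖b‖ + 9 / 10 * p ‖c‖ := by
    simp only [hp, sqrt_rpow_two_add_rpow_eq_mul σ hA, sqrt_rpow_two_add_rpow_eq_mul σ hB,
      sqrt_rpow_two_add_rpow_eq_mul σ hC]
    exact mul_le_add_mul_of_antitoneOn (antitoneOn_sqrt_one_add_rpow_neg hσ0.le) hB hC hba.le
      (hcmin.trans (min_le_left _ _)) (by norm_num) (sqrt_nonneg _) hnorm
  linarith

theorem phase_lower_bound_angle (σ : ℝ) (hσ0 : 0 < σ) (hσ2 : σ < 2)
    (p : ℝ → ℝ) (hp : p = fun r => Real.sqrt (r ^ (2:ℝ) + r ^ (2 - σ)))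
    (a b c : EuclideanSpace ℝ (Fin 3))
    (ha : a ≠ 0) (hb : b ≠ 0) (hc : c ≠ 0) (habc : a = b + c)
    (hcmin : ‖c‖ ≤ min ‖a‖ ‖b‖) (hba : ‖b‖ < ‖a‖)
    (hcos : (inner ℝ a c : ℝ) / (‖a‖ * ‖c‖) ≤ 9 / 10) :
    p ‖c‖ / 10 ≤ p ‖b‖ + p ‖c‖ - p ‖a‖ :=
  phase_lower_bound_angle_general σ hσ0 p hp a b c ha hb hc habc hcmin hba hcos
end

section
/- Let 0 < σ < 2 and Q(r) = ((1+r^σ)/r^σ)^{1/2}. If 0 < |c|^σ < (3/4)|b|^σ and |c| < 1, then Q(|c|) - Q(|b|) ≥ C · |c|^{-σ/2} · (1 + |b|^σ)^{-1/2} for some constant C > 0 depending only on σ; consequently |c|(Q(|c|) - Q(|b|)) ≳ |c|^{(2-σ)/2} (1+|b|^σ)^{-1/2}. -/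
theorem Q_difference_lower_bound (σ : ℝ) (hσ0 : 0 < σ) (hσ2 : σ < 2)
    (Q : ℝ → ℝ) (hQ : Q = fun r => Real.sqrt ((1 + r ^ σ) / r ^ σ)) :
    ∃ C : ℝ, 0 < C ∧
      ∀ b c : ℝ, 0 < b → 0 < c → c ^ σ < (3 / 4) * b ^ σ → c < 1 →
        C * c ^ (-(σ / 2)) / Real.sqrt (1 + b ^ σ) ≤ Q c - Q b ∧
        C * c ^ ((2 - σ) / 2) / Real.sqrt (1 + b ^ σ) ≤ c * (Q c - Q b) := by
  subst hQ
  refine ⟨1/16, by norm_num, ?_⟩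
  intro b c hb hc hcb hc1
  dsimp only
  have hcσ : 0 < c ^ σ := Real.rpow_pos_of_pos hc σ
  have hbσ : 0 < b ^ σ := Real.rpow_pos_of_pos hb σ
  set t := c ^ (-(σ/2)) with ht
  have htpos : 0 < t := Real.rpow_pos_of_pos hc _
  have ht2 : t * t = 1 / c ^ σ := by
    rw [ht, ← Real.rpow_add hc, show -(σ/2) + -(σ/2) = -σ by ring,
      Real.rpow_neg hc.le, one_div]
  set A := Real.sqrt ((1 + c ^ σ) / c ^ σ) with hA
  set B := Real.sqrt ((1 + b ^ σ) / b ^ σ) with hB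
  have hAnn : 0 ≤ A := Real.sqrt_nonneg _
  have hBnn : 0 ≤ B := Real.sqrt_nonneg _
  have hA2 : A * A = (1 + c ^ σ) / c ^ σ := Real.mul_self_sqrt (by positivity)
  have hB2 : B * B = (1 + b ^ σ) / b ^ σ := Real.mul_self_sqrt (by positivity)
  have hA2' : A * A = 1 / c ^ σ + 1 := by rw [hA2]; field_simp
  have hB2' : B * B = 1 / b ^ σ + 1 := by rw [hB2]; field_simp
  clear_value t A B
  have hcs1 : c ^ σ < 1 := Real.rpow_lt_one hc.le hc1 hσ0
  -- A ≤ 2 t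
  have hAt : A ≤ 2 * t := by
    have harg : (1 + c ^ σ) / c ^ σ ≤ (2 * t) ^ 2 := by
      have : (2 * t) ^ 2 = 4 * (1 / c ^ σ) := by rw [← ht2]; ring
      rw [this, div_le_iff₀ hcσ]
      have h4 : 4 * (1 / c ^ σ) * c ^ σ = 4 := by field_simp
      rw [h4]; nlinarith
    calc A = Real.sqrt ((1 + c ^ σ) / c ^ σ) := hA
      _ ≤ Real.sqrt ((2 * t) ^ 2) := Real.sqrt_le_sqrt harg
      _ = 2 * t := Real.sqrt_sq (by positivity)
  -- B ≤ A
  have hBA : B ≤ A := by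
    have hle : 1 / b ^ σ ≤ 1 / c ^ σ := by
      apply one_div_le_one_div_of_le hcσ
      nlinarith
    nlinarith [hB2', hA2']
  -- key: A*A - B*B ≥ t*t/4
  have hkey : t * t / 4 ≤ A * A - B * B := by
    rw [hA2', hB2', ht2]
    have h : 1 / b ^ σ ≤ (3/4) * (1 / c ^ σ) := by
      rw [div_le_iff₀ hbσ]
      have : c ^ σ * (1 / c ^ σ) = 1 := by field_simp
      nlinarith [hcb, hcσ, hbσ, mul_pos hcσ hbσ, one_div_pos.mpr hcσ]
    nlinarith
  have hdiff : t / 16 ≤ A - B := by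
    have hsum : A + B ≤ 4 * t := by linarith
    have hABnn : 0 ≤ A - B := by linarith
    have h1 : t * t / 4 ≤ (A - B) * (4 * t) := by
      calc t * t / 4 ≤ A * A - B * B := hkey
        _ = (A - B) * (A + B) := by ring
        _ ≤ (A - B) * (4 * t) := mul_le_mul_of_nonneg_left hsum hABnn
    have h2 : t * t / 4 / (4 * t) ≤ A - B := (div_le_iff₀ (by positivity)).mpr h1
    have h3 : t * t / 4 / (4 * t) = t / 16 := by
      field_simp
      ring
    linarith [h3 ▸ h2]
  have hs1 : (1:ℝ) ≤ Real.sqrt (1 + b ^ σ) := by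
    have h := Real.sqrt_le_sqrt (show (1:ℝ) ≤ 1 + b ^ σ by nlinarith)
    simpa using h
  have hfirst : 1/16 * t / Real.sqrt (1 + b ^ σ) ≤ A - B := by
    calc 1/16 * t / Real.sqrt (1 + b ^ σ) ≤ 1/16 * t :=
          div_le_self (by positivity) hs1
      _ = t / 16 := by ring
      _ ≤ A - B := hdiff
  refine ⟨hfirst, ?_⟩
  have hct : c ^ ((2 - σ) / 2) = c * t := by
    rw [ht, show (2 - σ)/2 = 1 + (-(σ/2)) by ring, Real.rpow_add hc, Real.rpow_one]
  calc 1/16 * c ^ ((2 - σ) / 2) / Real.sqrt (1 + b ^ σ)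
      ≤ 1/16 * c ^ ((2 - σ) / 2) := div_le_self (by positivity) hs1
    _ = c * (t / 16) := by rw [hct]; ring
    _ ≤ c * (A - B) := by
        exact mul_le_mul_of_nonneg_left hdiff hc.le
end
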